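/- arXiv:2105.14981 — 4 statements merged into one kernel-verified Lean document; each statement's English description precedes it below -/
import Mathlib

section
/- For all n ≥ 0, the integral over [-1,1] of (1+t)·P_n^{(0,2)}(t) dt equals 4·(-1)^n/((n+1)(n+2)), where P_n^{(0,2)} is the Jacobi polynomial of degree n with parameters α=0, β=2. -/
/-!
Substituting `t = 2x - 1` turns the `s`-th summand of `(1 + t) P_n^{(0,2)}(t)` into the beta
integral `∫₀¹ x^(n-s+1) (x-1)^s dx`, so that the `s`-th term contributes
`4 (-1)^s (n + 1 - s) C(n+2, s) / ((n + 1)(n + 2))`. Writing `n + 1 - s` as the number of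
`t ∈ [s, n]` and summing over `s` first, the identity
`∑_{s ≤ t} (-1)^s C(m+1, s) = (-1)^t C(m, t)` applied twice collapses the remaining sum
to `(-1)^n`.
-/

open MeasureTheory intervalIntegral Finset

/-- The Jacobi polynomial `P_n^{(a,b)}` with nonnegative integer parameters,
given by the standard finite-sum formula, normalized by
`P_n^{(a,b)}(1) = (a+1)_n / n!`. -/
noncomputable def jacobiP (a b n : ℕ) (x : ℝ) : ℝ :=
  ∑ s ∈ Finset.range (n + 1),
    (Nat.choose (n + a) (n - s) : ℝ) * (Nat.choose (n + b) s : ℝ) *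
      ((x - 1) / 2) ^ s * ((x + 1) / 2) ^ (n - s)

open scoped Nat

theorem integral_pow_mul_one_sub_pow (a b : ℕ) :
    ∫ x in (0 : ℝ)..1, x ^ a * (1 - x) ^ b = a ! * b ! / (a + b + 1)! := by
  have hbeta := Complex.betaIntegral_eq_Gamma_mul_div (a + 1) (b + 1)
    (by norm_cast; omega) (by norm_cast; omega)
  have hGamma : (a + 1 + (b + 1) : ℂ) = ((a + b + 1 : ℕ) : ℂ) + 1 := by push_cast; ring
  simp only [Complex.betaIntegral, add_sub_cancel_right, Complex.cpow_natCast, hGamma,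
    Complex.Gamma_nat_eq_factorial] at hbeta
  apply Complex.ofReal_injective
  rw [← integral_ofReal]
  push_cast
  exact hbeta

theorem integral_sub_one_div_two_pow_mul_add_one_div_two_pow (a b : ℕ) :
    ∫ t in (-1 : ℝ)..1, ((t - 1) / 2) ^ a * ((t + 1) / 2) ^ b
      = 2 * (-1) ^ a * (a ! * b ! / (a + b + 1)!) := by
  calc ∫ t in (-1 : ℝ)..1, ((t - 1) / 2) ^ a * ((t + 1) / 2) ^ b
      = 2 * ∫ x in (0 : ℝ)..1, ((2 * x - 1 - 1) / 2) ^ a * ((2 * x - 1 + 1) / 2) ^ b := by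
        rw [integral_comp_mul_sub (fun t ↦ ((t - 1) / 2) ^ a * ((t + 1) / 2) ^ b) two_ne_zero,
          smul_eq_mul, mul_inv_cancel_left₀ two_ne_zero]
        norm_num
    _ = 2 * ∫ x in (0 : ℝ)..1, (-1) ^ a * (x ^ b * (1 - x) ^ a) := by
        congr 1
        refine integral_congr fun x _ ↦ ?_
        rw [show (2 * x - 1 - 1) / 2 = -1 * (1 - x) by ring, show (2 * x - 1 + 1) / 2 = x by ring,
          mul_pow]
        ring
    _ = 2 * (-1) ^ a * (a ! * b ! / (a + b + 1)!) := by
        rw [intervalIntegral.integral_const_mul, integral_pow_mul_one_sub_pow, add_comm b a,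
          mul_comm (b ! : ℝ)]
        ring

theorem integral_one_add_mul_sub_one_div_two_pow_mul_add_one_div_two_pow (a b : ℕ) :
    ∫ t in (-1 : ℝ)..1, (1 + t) * (((t - 1) / 2) ^ a * ((t + 1) / 2) ^ b)
      = 4 * (-1) ^ a * (a ! * (b + 1)! / (a + b + 2)!) := by
  have hshift : ∀ t : ℝ, (1 + t) * (((t - 1) / 2) ^ a * ((t + 1) / 2) ^ b)
      = 2 * (((t - 1) / 2) ^ a * ((t + 1) / 2) ^ (b + 1)) := fun t ↦ by ring
  simp_rw [hshift]
  rw [intervalIntegral.integral_const_mul, integral_sub_one_div_two_pow_mul_add_one_div_two_pow,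
    show a + (b + 1) + 1 = a + b + 2 by ring]
  ring

theorem Int.alternating_sum_range_sub_mul_choose (n : ℕ) :
    ∑ s ∈ Finset.range (n + 1), (-1 : ℤ) ^ s * (n + 1 - s : ℕ) * (n + 2).choose s
      = (-1) ^ n := by
  have hflip := sum_range_diag_flip (n + 1) fun k _ ↦ (-1 : ℤ) ^ k * (n + 1 + 1).choose k
  simp only [Int.alternating_sum_range_choose_eq_choose, sum_const, card_range,
    nsmul_eq_mul, Nat.choose_self, Nat.cast_one, mul_one] at hflip
  rw [hflip]
  exact sum_congr rfl fun s _ ↦ by ring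

theorem choose_mul_factorial_mul_factorial_succ_div {n s : ℕ} (hs : s ≤ n) :
    (n.choose s : ℝ) * (s ! * (n - s + 1)!) / (n + 2)!
      = (n + 1 - s : ℕ) / ((n + 1) * (n + 2)) := by
  have hchoose := Nat.choose_mul_factorial_mul_factorial hs
  have hchoose_ne : (n.choose s : ℝ) ≠ 0 := Nat.cast_ne_zero.mpr (Nat.choose_pos hs).ne'
  rw [Nat.factorial_succ (n - s), show n + 2 = n + 1 + 1 by rfl, Nat.factorial_succ (n + 1),
    Nat.factorial_succ n, ← hchoose]
  push_cast [Nat.cast_sub hs, Nat.cast_sub (show s ≤ n + 1 by omega)]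
  field_simp
  ring

theorem integral_one_add_mul_jacobiP_zero_two_summand {n s : ℕ} (hs : s ≤ n) :
    ∫ t in (-1 : ℝ)..1, (1 + t) * ((n.choose (n - s) : ℝ) * (n + 2).choose s *
        ((t - 1) / 2) ^ s * ((t + 1) / 2) ^ (n - s))
      = 4 / ((n + 1) * (n + 2)) *
          ((-1 : ℤ) ^ s * (n + 1 - s : ℕ) * (n + 2).choose s : ℤ) := by
  calc _ = n.choose s * (n + 2).choose s *
        ∫ t in (-1 : ℝ)..1, (1 + t) * (((t - 1) / 2) ^ s * ((t + 1) / 2) ^ (n - s)) := by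
        rw [← intervalIntegral.integral_const_mul, Nat.choose_symm hs]
        congr with t
        ring
    _ = _ := by
        rw [integral_one_add_mul_sub_one_div_two_pow_mul_add_one_div_two_pow,
          show s + (n - s) + 2 = n + 2 by omega]
        push_cast
        linear_combination (4 * (-1) ^ s * ((n + 2).choose s : ℝ)) *
          choose_mul_factorial_mul_factorial_succ_div hs

theorem integral_one_add_mul_jacobiP_zero_two (n : ℕ) :
    ∫ t in (-1 : ℝ)..1, (1 + t) * jacobiP 0 2 n t
      = 4 * (-1 : ℝ) ^ n / ((n + 1) * (n + 2)) := by
  have hint : ∀ s ∈ range (n + 1), IntervalIntegrable (fun t : ℝ ↦ (1 + t) *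
      ((n.choose (n - s) : ℝ) * (n + 2).choose s * ((t - 1) / 2) ^ s * ((t + 1) / 2) ^ (n - s)))
      volume (-1) 1 :=
    fun s _ ↦ (by fun_prop : Continuous _).intervalIntegrable _ _
  simp only [jacobiP, Nat.add_zero, mul_sum]
  rw [intervalIntegral.integral_finsetSum hint,
    sum_congr rfl fun s hs ↦
      integral_one_add_mul_jacobiP_zero_two_summand (mem_range_succ_iff.mp hs),
    ← mul_sum, ← Int.cast_sum, Int.alternating_sum_range_sub_mul_choose]
  push_cast
  ring
end

section
/- For all n ≥ 0, the integral over [-1,1] of (1-t)·P_n^{(0,2)}(t)·P_n^{(1,1)}(t) dt equals 2(n+1). -/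
open MeasureTheory intervalIntegral Finset

/-!
Expand `P_n^{(0,2)}` in powers of `1 + t`. Every term but the constant one, `P_n^{(0,2)}(-1)`, is
`1 + t` times a polynomial of degree `< n`, hence orthogonal to `P_n^{(1,1)}` for the weight
`(1 - t)(1 + t)`. Orthogonality is read off the explicit sum: by the Beta integral
`∫ (1-t)^i (1+t)^j`, a moment of `P_n^{(a,b)}` becomes an alternating binomial sum
`∑ (-1)^r C(n,r) p(r)` with `deg p < n`, i.e. an `n`-th forward difference of `p`, which vanishes.
What remains is `P_n^{(0,2)}(-1) · ∫ (1-t) P_n^{(1,1)} = (-1)^n C(n+2,2) · 4(-1)^n/(n+2)`.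
-/

open Nat Polynomial

theorem Polynomial.sum_range_neg_one_pow_mul_choose_mul_eval {R : Type*} [CommRing R] {P : R[X]}
    {n : ℕ} (hP : P.natDegree < n) :
    ∑ k ∈ range (n + 1), (-1) ^ k * (n.choose k : R) * P.eval (k : R) = 0 := by
  have h := fwdDiff_iter_eq_sum_shift (1 : R) P.eval n 0
  rw [fwdDiff_iter_eq_zero_of_degree_lt hP, Pi.zero_apply] at h
  calc ∑ k ∈ range (n + 1), (-1) ^ k * (n.choose k : R) * P.eval (k : R)
      = (-1) ^ n * ∑ k ∈ range (n + 1),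
          ((-1 : ℤ) ^ (n - k) * n.choose k) • P.eval (0 + k • 1) := by
        rw [mul_sum]
        refine sum_congr rfl fun k hk => ?_
        have hsign : (-1 : R) ^ k = (-1) ^ n * (-1) ^ (n - k) := by
          rw [← pow_add, show n + (n - k) = k + 2 * (n - k) by grind, pow_add, pow_mul]
          simp
        simp only [hsign, nsmul_eq_mul, mul_one, zero_add, zsmul_eq_mul, Int.cast_mul,
          Int.cast_pow, Int.cast_neg, Int.cast_one, Int.cast_natCast]
        ring
    _ = 0 := by rw [← h, mul_zero]

theorem Nat.choose_mul_factorial_mul_factorial_eq_mul_ascFactorial {n r : ℕ} (a k : ℕ)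
    (hr : r ≤ n) :
    (n + a).choose (n - r) * ((a + r)! * (n - r + k)!)
      = (n + a)! * (n - r + 1).ascFactorial k := by
  rw [← factorial_mul_ascFactorial (n - r) k, ← mul_assoc, ← mul_assoc,
    mul_right_comm _ (a + r)!, show a + r = n + a - (n - r) by omega,
    choose_mul_factorial_mul_factorial (by omega)]

theorem Nat.factorial_mul_choose_mul_ascFactorial {n r : ℕ} (b : ℕ) (hr : r ≤ n) :
    n ! * ((n + b).choose r * (n - r + 1).ascFactorial b) = (n + b)! * n.choose r := by
  apply Nat.eq_of_mul_eq_mul_right (mul_pos (factorial_pos r) (factorial_pos (n - r)))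
  calc n ! * ((n + b).choose r * (n - r + 1).ascFactorial b) * (r ! * (n - r)!)
      = n ! * ((n + b).choose r * r ! * (n + b - r)!) := by
        rw [show n + b - r = n - r + b by omega, ← factorial_mul_ascFactorial]
        ring
    _ = (n + b)! * (n.choose r * r ! * (n - r)!) := by
        rw [choose_mul_factorial_mul_factorial (by omega), choose_mul_factorial_mul_factorial hr]
        ring
    _ = (n + b)! * n.choose r * (r ! * (n - r)!) := by ring

theorem integral_one_sub_pow_succ_mul_one_add_pow (i j : ℕ) :
    ∫ t in (-1 : ℝ)..1, (1 - t) ^ (i + 1) * (1 + t) ^ j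
      = (i + 1) / (j + 1) * ∫ t in (-1 : ℝ)..1, (1 - t) ^ i * (1 + t) ^ (j + 1) := by
  have hj : (j : ℝ) + 1 ≠ 0 := by positivity
  rw [integral_mul_deriv_eq_deriv_mul (u := fun t => (1 - t) ^ (i + 1))
      (u' := fun t => -((i + 1 : ℝ) * (1 - t) ^ i))
      (v := fun t => (1 + t) ^ (j + 1) / (j + 1)) (v' := fun t => (1 + t) ^ j)
      (fun t _ => by simpa using ((hasDerivAt_id t).const_sub 1).fun_pow (i + 1))
      (fun t _ => by
        have h := (((hasDerivAt_id t).const_add 1).fun_pow (j + 1)).div_const ((j : ℝ) + 1)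
        simp only [id, add_tsub_cancel_right, Nat.cast_add, Nat.cast_one, mul_one] at h
        rwa [mul_div_cancel_left₀ _ hj] at h)
      (Continuous.intervalIntegrable (by fun_prop) _ _)
      (Continuous.intervalIntegrable (by fun_prop) _ _)]
  rw [sub_self, add_neg_cancel, zero_pow (succ_ne_zero i), zero_pow (succ_ne_zero j), zero_mul,
    zero_div, mul_zero, sub_zero, zero_sub, ← intervalIntegral.integral_neg,
    ← intervalIntegral.integral_const_mul]
  congr 1
  funext t
  ring

theorem integral_one_sub_pow_mul_one_add_pow (i j : ℕ) :
    ∫ t in (-1 : ℝ)..1, (1 - t) ^ i * (1 + t) ^ j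
      = 2 ^ (i + j + 1) * i ! * j ! / (i + j + 1)! := by
  induction i generalizing j with
  | zero =>
    have h := integral_comp_add_left (a := -1) (b := 1) (fun x : ℝ => x ^ j) 1
    simp only [zero_add, pow_zero, one_mul, factorial_zero, cast_one, mul_one] at h ⊢
    rw [h, show (1 : ℝ) + -1 = 0 by norm_num, integral_pow, factorial_succ]
    push_cast
    field_simp
    norm_num
  | succ i ih =>
    rw [integral_one_sub_pow_succ_mul_one_add_pow, ih,
      show i + 1 + j + 1 = i + (j + 1) + 1 by omega, factorial_succ i, factorial_succ j]
    push_cast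
    field_simp

@[fun_prop]
theorem continuous_jacobiP (a b n : ℕ) : Continuous (jacobiP a b n) := by
  unfold jacobiP
  fun_prop

theorem jacobiP_neg_one (a b n : ℕ) : jacobiP a b n (-1) = (-1) ^ n * (n + b).choose n := by
  rw [jacobiP, sum_eq_single_of_mem n (self_mem_range_succ n) fun s hs hsn => ?_]
  · norm_num [mul_comm]
  · have : n - s ≠ 0 := by have := mem_range.1 hs; omega
    simp [this]

theorem exists_jacobiP_eq_sum_one_add_pow (a b n : ℕ) :
    ∃ c : ℕ → ℝ, ∀ t, jacobiP a b n t = ∑ k ∈ range (n + 1), c k * (1 + t) ^ k := by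
  set p : ℝ[X] := ∑ s ∈ range (n + 1), C ((n + a).choose (n - s) * (n + b).choose s : ℝ) *
    (C (1 / 2) * X - 1) ^ s * (C (1 / 2) * X) ^ (n - s)
  have hp : p.natDegree < n + 1 := by
    refine Nat.lt_succ_of_le (natDegree_sum_le_of_forall_le _ _ fun s hs => ?_)
    have hsn : s ≤ n := mem_range_succ_iff.mp hs
    compute_degree
    omega
  refine ⟨p.coeff, fun t => ?_⟩
  rw [← eval_eq_sum_range' hp]
  simp only [p, jacobiP, eval_finsetSum, eval_mul, eval_pow, eval_C, eval_X, eval_sub, eval_one]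
  exact sum_congr rfl fun s _ => by ring

theorem integral_one_sub_pow_mul_one_add_pow_mul_jacobiP (a b n k : ℕ) :
    ∫ t in (-1 : ℝ)..1, (1 - t) ^ a * (1 + t) ^ k * jacobiP a b n t
      = 2 ^ (a + k + 1) * (n + a)! / (n + a + k + 1)! *
          ∑ r ∈ range (n + 1),
            (-1) ^ r * ((n + b).choose r : ℝ) * (n - r + 1).ascFactorial k := by
  have hterm : ∀ r ∈ range (n + 1), ∀ t : ℝ,
      (1 - t) ^ a * (1 + t) ^ k * ((n + a).choose (n - r) * (n + b).choose r *
        ((t - 1) / 2) ^ r * ((t + 1) / 2) ^ (n - r))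
      = (-1) ^ r * (n + a).choose (n - r) * (n + b).choose r / 2 ^ n *
          ((1 - t) ^ (a + r) * (1 + t) ^ (k + (n - r))) := by
    intro r hr t
    rw [show (t - 1) / 2 = -(1 - t) / 2 by ring, show (t + 1) / 2 = (1 + t) / 2 by ring,
      div_pow, div_pow, neg_pow, pow_add, pow_add,
      show (2 : ℝ) ^ n = 2 ^ r * 2 ^ (n - r) by
        rw [← pow_add, Nat.add_sub_cancel' (mem_range_succ_iff.mp hr)]]
    field_simp
  simp_rw [jacobiP, mul_sum]
  rw [intervalIntegral.integral_finsetSum fun r _ =>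
    Continuous.intervalIntegrable (by fun_prop) _ _]
  refine sum_congr rfl fun r hr => ?_
  have hrn : r ≤ n := mem_range_succ_iff.mp hr
  have hfac : ((n + a).choose (n - r) : ℝ) * ((a + r)! * (n - r + k)!)
      = (n + a)! * (n - r + 1).ascFactorial k := by
    exact_mod_cast choose_mul_factorial_mul_factorial_eq_mul_ascFactorial a k hrn
  simp_rw [hterm r hr]
  rw [intervalIntegral.integral_const_mul, integral_one_sub_pow_mul_one_add_pow,
    show a + r + (k + (n - r)) + 1 = n + a + k + 1 by omega, show k + (n - r) = n - r + k by omega,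
    show (2 : ℝ) ^ (n + a + k + 1) = 2 ^ n * 2 ^ (a + k + 1) by rw [← pow_add]; ring_nf]
  field_simp
  linear_combination ((n + b).choose r : ℝ) * hfac

theorem integral_one_sub_pow_mul_one_add_pow_mul_jacobiP_eq_zero (a : ℕ) {b n j : ℕ}
    (hj : j < n) :
    ∫ t in (-1 : ℝ)..1, (1 - t) ^ a * (1 + t) ^ (b + j) * jacobiP a b n t = 0 := by
  set P : ℝ[X] := (ascPochhammer ℝ j).comp (C ((n + b + 1 : ℕ) : ℝ) - X)
  have hP : P.natDegree = j := by
    rw [natDegree_comp, ascPochhammer_natDegree,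
      show (C _ - X : ℝ[X]).natDegree = 1 by compute_degree!, mul_one]
  have hterm : ∀ r ∈ range (n + 1),
      (-1) ^ r * ((n + b).choose r : ℝ) * (n - r + 1).ascFactorial (b + j)
        = (n + b)! / n ! * ((-1) ^ r * (n.choose r : ℝ) * P.eval (r : ℝ)) := by
    intro r hr
    have hrn : r ≤ n := mem_range_succ_iff.mp hr
    have hchoose : (n ! : ℝ) * ((n + b).choose r * (n - r + 1).ascFactorial b)
        = (n + b)! * n.choose r := by
      exact_mod_cast factorial_mul_choose_mul_ascFactorial b hrn
    have hPr : P.eval (r : ℝ) = (n - r + 1 + b).ascFactorial j := by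
      rw [eval_comp, ← ascPochhammer_nat_eq_natCast_ascFactorial]
      congr 1
      simp only [eval_sub, eval_C, eval_X]
      push_cast [Nat.cast_sub hrn]
      ring
    rw [hPr, ← ascFactorial_mul_ascFactorial]
    field_simp
    push_cast
    linear_combination ((n - r + 1 + b).ascFactorial j : ℝ) * hchoose
  rw [integral_one_sub_pow_mul_one_add_pow_mul_jacobiP, sum_congr rfl hterm, ← mul_sum,
    sum_range_neg_one_pow_mul_choose_mul_eval (hP ▸ hj), mul_zero, mul_zero]

theorem integral_one_sub_pow_mul_jacobiP (a b n : ℕ) :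
    ∫ t in (-1 : ℝ)..1, (1 - t) ^ a * jacobiP a (b + 1) n t
      = (-1) ^ n * 2 ^ (a + 1) * (n + b).choose n / (n + a + 1) := by
  have halt : ∑ r ∈ range (n + 1), (-1) ^ r * ((n + (b + 1)).choose r : ℝ)
      = (-1) ^ n * (n + b).choose n := by
    exact_mod_cast Int.alternating_sum_range_choose_eq_choose (n := n + b) (m := n)
  have h := integral_one_sub_pow_mul_one_add_pow_mul_jacobiP a (b + 1) n 0
  simp only [pow_zero, mul_one, ascFactorial_zero, Nat.cast_one, add_zero] at h
  rw [h, halt, factorial_succ]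
  push_cast
  field_simp

theorem integral_one_sub_pow_mul_sum_one_add_pow_mul_jacobiP (a n : ℕ) (c : ℕ → ℝ) :
    ∫ t in (-1 : ℝ)..1,
        (1 - t) ^ a * (∑ k ∈ range (n + 1), c k * (1 + t) ^ k) * jacobiP a 1 n t
      = c 0 * ((-1) ^ n * 2 ^ (a + 1) / (n + a + 1)) := by
  have hsplit : ∀ t, (1 - t) ^ a * (∑ k ∈ range (n + 1), c k * (1 + t) ^ k) * jacobiP a 1 n t
      = ∑ k ∈ range n, c (k + 1) * ((1 - t) ^ a * (1 + t) ^ (1 + k) * jacobiP a 1 n t)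
        + c 0 * ((1 - t) ^ a * jacobiP a (0 + 1) n t) := by
    intro t
    rw [sum_range_succ', mul_add, add_mul, mul_sum, sum_mul]
    congr 1
    · exact sum_congr rfl fun k _ => by ring
    · ring
  simp_rw [hsplit]
  rw [intervalIntegral.integral_add (Continuous.intervalIntegrable (by fun_prop) _ _)
      (Continuous.intervalIntegrable (by fun_prop) _ _),
    intervalIntegral.integral_finsetSum fun k _ => Continuous.intervalIntegrable (by fun_prop) _ _,
    sum_eq_zero fun k hk => by
      rw [intervalIntegral.integral_const_mul,
        integral_one_sub_pow_mul_one_add_pow_mul_jacobiP_eq_zero a (mem_range.1 hk), mul_zero],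
    zero_add, intervalIntegral.integral_const_mul, integral_one_sub_pow_mul_jacobiP, add_zero,
    choose_self, cast_one, mul_one]

theorem integral_one_sub_mul_jacobiP_zero_two_mul_one_one (n : ℕ) :
    ∫ t in (-1 : ℝ)..1, (1 - t) * jacobiP 0 2 n t * jacobiP 1 1 n t
      = 2 * ((n : ℝ) + 1) := by
  obtain ⟨c, hc⟩ := exists_jacobiP_eq_sum_one_add_pow 0 2 n
  have hc0 : c 0 = (-1) ^ n * (n + 2).choose n := by
    simpa [sum_range_succ'] using (hc (-1)).symm.trans (jacobiP_neg_one 0 2 n)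
  have hsign : (-1 : ℝ) ^ n * (-1) ^ n = 1 := by rw [← mul_pow]; norm_num
  calc ∫ t in (-1 : ℝ)..1, (1 - t) * jacobiP 0 2 n t * jacobiP 1 1 n t
      = ∫ t in (-1 : ℝ)..1,
          (1 - t) ^ 1 * (∑ k ∈ range (n + 1), c k * (1 + t) ^ k) * jacobiP 1 1 n t := by
        simp_rw [hc, pow_one]
    _ = 2 * ((n : ℝ) + 1) := by
        rw [integral_one_sub_pow_mul_sum_one_add_pow_mul_jacobiP, hc0, choose_symm_add,
          cast_choose_two]
        push_cast
        field_simp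
        linear_combination ((n : ℝ) + 2) * (n + 1) * hsign
end

section
/- For all n ≥ 0, the integral over [-1,1] of P_n^{(0,2)}(t) dt equals 2·(-1)^n. -/
open MeasureTheory intervalIntegral Finset

/-! Expanding `P_n^{(0,2)}` termwise reduces the integral to the Beta integrals
`∫_{-1}^1 ((t+1)/2)^a ((t-1)/2)^b dt = 2 (-1)^b a! b! / (a+b+1)!`, which follow by integrating
by parts `b` times. The `s`-th term then contributes `2 (-1)^s C(n+2, s) / (n+1)`, and the partial
alternating sum `∑_{s ≤ n} (-1)^s C(n+2, s) = (-1)^n (n+1)` gives the result. -/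

noncomputable def betaIntegralPM (a b : ℕ) : ℝ :=
  ∫ t in (-1 : ℝ)..1, ((t + 1) / 2) ^ a * ((t - 1) / 2) ^ b

lemma hasDerivAt_div_two_pow {f : ℝ → ℝ} {t : ℝ} (hf : HasDerivAt f 1 t) (k : ℕ) :
    HasDerivAt (fun t ↦ (f t / 2) ^ (k + 1)) ((k + 1) / 2 * (f t / 2) ^ k) t := by
  refine ((hf.div_const 2).fun_pow (k + 1)).congr_deriv ?_
  rw [Nat.add_sub_cancel]
  push_cast
  ring

lemma add_one_mul_betaIntegralPM_zero_right (a : ℕ) : (a + 1) * betaIntegralPM a 0 = 2 := by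
  have hderiv : ∀ t ∈ Set.uIcc (-1 : ℝ) 1, HasDerivAt (fun t ↦ ((t + 1) / 2) ^ (a + 1))
      ((a + 1) / 2 * ((t + 1) / 2) ^ a) t :=
    fun t _ ↦ hasDerivAt_div_two_pow ((hasDerivAt_id' t).add_const 1) a
  have hint := integral_eq_sub_of_hasDerivAt hderiv
    (by apply Continuous.intervalIntegrable; fun_prop)
  rw [intervalIntegral.integral_const_mul] at hint
  simp only [betaIntegralPM, pow_zero, mul_one]
  norm_num at hint
  linear_combination 2 * hint

lemma add_one_mul_betaIntegralPM_succ_right (a b : ℕ) :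
    (a + 1) * betaIntegralPM a (b + 1) = -(b + 1) * betaIntegralPM (a + 1) b := by
  have hu : ∀ t ∈ Set.uIcc (-1 : ℝ) 1, HasDerivAt (fun t ↦ ((t - 1) / 2) ^ (b + 1))
      ((b + 1) / 2 * ((t - 1) / 2) ^ b) t :=
    fun t _ ↦ hasDerivAt_div_two_pow ((hasDerivAt_id' t).sub_const 1) b
  have hv : ∀ t ∈ Set.uIcc (-1 : ℝ) 1, HasDerivAt (fun t ↦ ((t + 1) / 2) ^ (a + 1))
      ((a + 1) / 2 * ((t + 1) / 2) ^ a) t :=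
    fun t _ ↦ hasDerivAt_div_two_pow ((hasDerivAt_id' t).add_const 1) a
  have hparts := integral_mul_deriv_eq_deriv_mul hu hv
    (by apply Continuous.intervalIntegrable; fun_prop)
    (by apply Continuous.intervalIntegrable; fun_prop)
  norm_num at hparts
  have hleft : ∫ t in (-1 : ℝ)..1, ((t - 1) / 2) ^ (b + 1) * ((a + 1) / 2 * ((t + 1) / 2) ^ a)
      = (a + 1) / 2 * betaIntegralPM a (b + 1) := by
    rw [betaIntegralPM, ← intervalIntegral.integral_const_mul]
    congr 1 with t
    ring
  have hright : ∫ t in (-1 : ℝ)..1, (b + 1) / 2 * ((t - 1) / 2) ^ b * ((t + 1) / 2) ^ (a + 1)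
      = (b + 1) / 2 * betaIntegralPM (a + 1) b := by
    rw [betaIntegralPM, ← intervalIntegral.integral_const_mul]
    congr 1 with t
    ring
  linear_combination 2 * hparts - 2 * hleft - 2 * hright

lemma add_one_mul_choose_mul_betaIntegralPM (a b : ℕ) :
    (a + b + 1) * (a + b).choose a * betaIntegralPM a b = 2 * (-1) ^ b := by
  induction b generalizing a with
  | zero => simpa using add_one_mul_betaIntegralPM_zero_right a
  | succ b ih =>
    have hchoose :
        ((a + b + 1).choose (a + 1) : ℝ) * (a + 1) = (a + b + 1).choose a * (b + 1) := by
      have := Nat.choose_succ_right_eq (a + b + 1) a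
      rw [show a + b + 1 - a = b + 1 by omega] at this
      exact_mod_cast this
    have hrec := add_one_mul_betaIntegralPM_succ_right a b
    specialize ih (a + 1)
    refine mul_left_cancel₀ (show (a + 1 : ℝ) ≠ 0 by positivity) ?_
    rw [show a + (b + 1) = a + b + 1 by omega]
    rw [show a + 1 + b = a + b + 1 by omega] at ih
    push_cast at ih ⊢
    linear_combination ((a : ℝ) + b + 2) * (a + b + 1).choose a * hrec
      + ((a : ℝ) + b + 2) * betaIntegralPM (a + 1) b * hchoose - ((a : ℝ) + 1) * ih

lemma add_one_mul_choose_sub_mul_betaIntegralPM {n s : ℕ} (hs : s ≤ n) :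
    (n + 1) * n.choose (n - s) * betaIntegralPM (n - s) s = 2 * (-1) ^ s := by
  have h := add_one_mul_choose_mul_betaIntegralPM (n - s) s
  rwa [Nat.sub_add_cancel hs, Nat.cast_sub hs, sub_add_cancel] at h

lemma integral_jacobiP (a b n : ℕ) :
    ∫ t in (-1 : ℝ)..1, jacobiP a b n t =
      ∑ s ∈ range (n + 1),
        (n + a).choose (n - s) * (n + b).choose s * betaIntegralPM (n - s) s := by
  simp only [jacobiP, betaIntegralPM]
  rw [intervalIntegral.integral_finsetSum
    fun s _ ↦ by apply Continuous.intervalIntegrable; fun_prop]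
  refine sum_congr rfl fun s _ ↦ ?_
  rw [← intervalIntegral.integral_const_mul]
  congr 1 with t
  ring

lemma sum_range_neg_one_pow_mul_choose_add_two (n : ℕ) :
    ∑ s ∈ range (n + 1), (-1 : ℝ) ^ s * (n + 2).choose s = (-1) ^ n * (n + 1) := by
  have h := Int.alternating_sum_range_choose_eq_choose (n := n + 1) (m := n)
  rw [Nat.choose_succ_self_right] at h
  exact_mod_cast h

theorem integral_jacobiP_zero_two (n : ℕ) :
    ∫ t in (-1 : ℝ)..1, jacobiP 0 2 n t = 2 * (-1 : ℝ) ^ n := by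
  refine mul_left_cancel₀ (show (n + 1 : ℝ) ≠ 0 by positivity) ?_
  calc (n + 1 : ℝ) * ∫ t in (-1 : ℝ)..1, jacobiP 0 2 n t
      = ∑ s ∈ range (n + 1), ((n + 2).choose s : ℝ) *
          ((n + 1) * n.choose (n - s) * betaIntegralPM (n - s) s) := by
        rw [integral_jacobiP, mul_sum]
        refine sum_congr rfl fun s _ ↦ ?_
        rw [Nat.add_zero]
        ring
    _ = 2 * ∑ s ∈ range (n + 1), (-1 : ℝ) ^ s * (n + 2).choose s := by
        rw [mul_sum]
        refine sum_congr rfl fun s hs ↦ ?_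
        rw [add_one_mul_choose_sub_mul_betaIntegralPM (Nat.lt_succ_iff.mp (mem_range.mp hs))]
        ring
    _ = (n + 1) * (2 * (-1) ^ n) := by
        rw [sum_range_neg_one_pow_mul_choose_add_two]
        ring
end

section
/- Let n ≥ 1 and let α_1, ..., α_{n+1} be real numbers with sin(α_i) ≠ 0 for all i. Let T_n be the symmetric tridiagonal n×n matrix with diagonal entries (T_n)_{ii} = sin(α_i + α_{i+1})/(sin α_i · sin α_{i+1}) and off-diagonal entries (T_n)_{i,i+1} = (T_n)_{i+1,i} = 1/sin α_{i+1}. Then det T_n = sin(α_1 + ... + α_{n+1}) / (sin α_1 · sin α_2 · ... · sin α_{n+1}). -/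
/-!
Expanding the determinant along the first row and then the first column gives the recursion
`det T(α₀, …, αₙ) = T₀₀ · det T(α₁, …, αₙ) - T₀₁ T₁₀ · det T(α₂, …, αₙ)`. The claimed value
satisfies the same recursion, by the identity `sin (a + b) sin (b + c) - sin a sin c =
sin b sin (a + b + c)` with `a = α₀`, `b = α₁`, `c = α₂ + ⋯ + αₙ`.
-/

open Real Finset

theorem sin_add_mul_sin_add_sub_sin_mul_sin (a b c : ℝ) :
    sin (a + b) * sin (b + c) - sin a * sin c = sin b * sin (a + b + c) := by
  simp only [sin_add, cos_add]
  linear_combination sin a * sin c * sin_sq_add_cos_sq b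

theorem Matrix.det_eq_of_corner_tridiagonal {R : Type*} [CommRing R] {n : ℕ}
    (M : Matrix (Fin (n + 2)) (Fin (n + 2)) R)
    (hrow : ∀ j : Fin n, M 0 j.succ.succ = 0) (hcol : ∀ i : Fin n, M i.succ.succ 0 = 0) :
    M.det = M 0 0 * (M.submatrix Fin.succ Fin.succ).det -
      M 0 1 * M 1 0 * (M.submatrix (Fin.succ ∘ Fin.succ) (Fin.succ ∘ Fin.succ)).det := by
  have hminor : (M.submatrix Fin.succ (Fin.succAbove 1)).det =
      M 1 0 * (M.submatrix (Fin.succ ∘ Fin.succ) (Fin.succ ∘ Fin.succ)).det := by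
    rw [Matrix.det_succ_column_zero, Fin.sum_univ_succ]
    simp [hcol, Function.comp_def]
  rw [Matrix.det_succ_row_zero, Fin.sum_univ_succ, Fin.sum_univ_succ]
  simp [hrow, hminor]
  ring

noncomputable def sinTridiagonal {n : ℕ} (α : Fin (n + 1) → ℝ) : Matrix (Fin n) (Fin n) ℝ :=
  Matrix.of fun i j =>
    if i = j then sin (α i.castSucc + α i.succ) / (sin (α i.castSucc) * sin (α i.succ))
    else if (i : ℕ) + 1 = j then 1 / sin (α j.castSucc)
    else if (j : ℕ) + 1 = i then 1 / sin (α i.castSucc)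
    else 0

theorem sinTridiagonal_submatrix_succ {n : ℕ} (α : Fin (n + 2) → ℝ) :
    (sinTridiagonal α).submatrix Fin.succ Fin.succ = sinTridiagonal fun i => α i.succ := by
  ext i j
  simp [sinTridiagonal]

theorem det_sinTridiagonal : ∀ {n : ℕ} (α : Fin (n + 1) → ℝ), (∀ i, sin (α i) ≠ 0) →
    (sinTridiagonal α).det = sin (∑ i, α i) / ∏ i, sin (α i)
  | 0, α, hα => by simp [hα 0]
  | 1, α, _ => by simp [sinTridiagonal, Fin.sum_univ_two, Fin.prod_univ_two]
  | n + 2, α, hα => by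
    rw [Matrix.det_eq_of_corner_tridiagonal, sinTridiagonal_submatrix_succ,
      ← Matrix.submatrix_submatrix, sinTridiagonal_submatrix_succ, sinTridiagonal_submatrix_succ,
      det_sinTridiagonal _ fun i => hα _, det_sinTridiagonal _ fun i => hα _]
    · have hP : ∏ i : Fin (n + 1), sin (α i.succ.succ) ≠ 0 := prod_ne_zero_iff.2 fun i _ => hα _
      simp [sinTridiagonal, Fin.sum_univ_succ (n := n + 1), Fin.prod_univ_succ (n := n + 1),
        Fin.sum_univ_succ (n := n + 2), Fin.prod_univ_succ (n := n + 2)]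
      generalize ∑ i : Fin (n + 1), α i.succ.succ = c
      generalize ∏ i : Fin (n + 1), sin (α i.succ.succ) = P at *
      field_simp [hα 0, hα 1]
      rw [← add_assoc]
      exact sin_add_mul_sin_add_sub_sin_mul_sin (α 0) (α 1) c
    · intro j
      simp [sinTridiagonal, Fin.ext_iff]
    · intro i
      simp [sinTridiagonal]

theorem det_tridiagonal_sin_general (n : ℕ) (α : Fin (n + 1) → ℝ)
    (hα : ∀ i, Real.sin (α i) ≠ 0)
    (T : Matrix (Fin n) (Fin n) ℝ)
    (hdiag : ∀ i : Fin n,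
      T i i = Real.sin (α i.castSucc + α i.succ) /
        (Real.sin (α i.castSucc) * Real.sin (α i.succ)))
    (hup : ∀ i j : Fin n, (i : ℕ) + 1 = (j : ℕ) →
      T i j = 1 / Real.sin (α j.castSucc))
    (hlow : ∀ i j : Fin n, (j : ℕ) + 1 = (i : ℕ) →
      T i j = 1 / Real.sin (α i.castSucc))
    (hzero : ∀ i j : Fin n, (i : ℕ) + 1 < (j : ℕ) ∨ (j : ℕ) + 1 < (i : ℕ) →
      T i j = 0) :
    T.det = Real.sin (∑ i, α i) / ∏ i, Real.sin (α i) := by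
  have hT : T = sinTridiagonal α := by
    ext i j
    simp only [sinTridiagonal, Matrix.of_apply]
    split_ifs with hij hsucc hpred
    · exact hij ▸ hdiag i
    · exact hup i j hsucc
    · exact hlow i j hpred
    · exact hzero i j (by have := Fin.val_ne_of_ne hij; omega)
  rw [hT, det_sinTridiagonal α hα]

theorem det_tridiagonal_sin (n : ℕ) (hn : 1 ≤ n) (α : Fin (n + 1) → ℝ)
    (hα : ∀ i, Real.sin (α i) ≠ 0)
    (T : Matrix (Fin n) (Fin n) ℝ)
    (hdiag : ∀ i : Fin n,
      T i i = Real.sin (α i.castSucc + α i.succ) /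
        (Real.sin (α i.castSucc) * Real.sin (α i.succ)))
    (hup : ∀ i j : Fin n, (i : ℕ) + 1 = (j : ℕ) →
      T i j = 1 / Real.sin (α j.castSucc))
    (hlow : ∀ i j : Fin n, (j : ℕ) + 1 = (i : ℕ) →
      T i j = 1 / Real.sin (α i.castSucc))
    (hzero : ∀ i j : Fin n, (i : ℕ) + 1 < (j : ℕ) ∨ (j : ℕ) + 1 < (i : ℕ) →
      T i j = 0) :
    T.det = Real.sin (∑ i, α i) / ∏ i, Real.sin (α i) :=
  det_tridiagonal_sin_general n α hα T hdiag hup hlow hzero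
end
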